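/- arXiv:1510.04800 — 2 statements merged into one kernel-verified Lean document; each statement's English description precedes it below -/
import Mathlib

section
/- Let r > 1 be an integer that is either equal to 2 or odd, and let p_1, p_2, ..., p_r be distinct primes such that p_i ≡ 1 (mod 4) for all 1 ≤ i ≤ r and the Legendre symbol (p_i/p_j) = -1 for all 1 ≤ i ≠ j ≤ r. Then the diophantine equation x^2 - p_1 p_2 ⋯ p_r · y^2 = -1 has a solution in integers x, y. -/
private lemma legendre_prod_helper {ι : Type*} (q : ℕ) [Fact q.Prime] (s : Finset ι)
    (f : ι → ℕ) :
    legendreSym q ((∏ i ∈ s, f i : ℕ) : ℤ) = ∏ i ∈ s, legendreSym q ((f i : ℕ) : ℤ) := by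
  classical
  induction s using Finset.cons_induction with
  | empty => simp [legendreSym.at_one]
  | cons i s hi ih =>
      rw [Finset.prod_cons, Finset.prod_cons, Nat.cast_mul, legendreSym.mul, ih]


private lemma prod_primes_dvd_helper {r : ℕ} (p : Fin r → ℕ) (hp : ∀ i, (p i).Prime)
    (hinj : Function.Injective p) (s : Finset (Fin r)) (n : ℕ)
    (h : ∀ i ∈ s, p i ∣ n) : (∏ i ∈ s, p i) ∣ n := by
  classical
  induction s using Finset.cons_induction with
  | empty => simp
  | cons i s hi ih =>
      rw [Finset.prod_cons]
      have hcop : Nat.Coprime (p i) (∏ j ∈ s, p j) :=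
        Nat.Coprime.prod_right fun j hj =>
          (Nat.coprime_primes (hp i) (hp j)).mpr fun he => hi (hinj he ▸ hj)
      exact hcop.mul_dvd_of_dvd_of_dvd (h i (Finset.mem_cons_self i s))
        (ih fun j hj => h j (Finset.mem_cons_of_mem hj))

set_option maxHeartbeats 1000000 in
/-- **Newman's theorem on negative Pell equations.**
Let `r > 1` be `2` or odd, and let `p 1, ..., p r` be distinct primes with
`p i ≡ 1 (mod 4)` and Legendre symbol `(p i / p j) = -1` for all `i ≠ j`.
Then `x² - p 1 ⋯ p r · y² = -1` has an integer solution. -/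
theorem negative_pell_of_primes (r : ℕ) (hr : 1 < r) (hr' : r = 2 ∨ Odd r)
    (p : Fin r → ℕ) (hp : ∀ i, (p i).Prime) (hinj : Function.Injective p)
    (h1 : ∀ i, p i % 4 = 1)
    (hleg : ∀ i j, i ≠ j → @legendreSym (p j) ⟨hp j⟩ (p i) = -1) :
    ∃ x y : ℤ, x ^ 2 - (∏ i, (p i : ℤ)) * y ^ 2 = -1 := by
  classical
  set d : ℕ := ∏ i, p i with hd_def
  clear_value d
  have hd_cast : (∏ i, (p i : ℤ)) = (d : ℤ) := by rw [hd_def]; push_cast; rfl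
  rw [hd_cast]
  have hdpos : 0 < d := by
    rw [hd_def]; exact Finset.prod_pos fun i _ => (hp i).pos
  haveI : Nonempty (Fin r) := ⟨⟨0, by omega⟩⟩
  have hd1 : 1 < d := by
    have hpd : p ⟨0, by omega⟩ ∣ d := by
      rw [hd_def]; exact Finset.dvd_prod_of_mem p (Finset.mem_univ _)
    exact lt_of_lt_of_le (hp _).one_lt (Nat.le_of_dvd hdpos hpd)
  have hd4 : d % 4 = 1 := by
    rw [hd_def]
    refine Finset.prod_induction p (fun n => n % 4 = 1) ?_ (by norm_num) (fun i _ => h1 i)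
    intro a b ha hb
    rw [Nat.mul_mod, ha, hb]
  -- d is not a square
  have hnsq : ¬ IsSquare ((d : ℤ)) := by
    rintro ⟨k, hk⟩
    have hk' : d = k.natAbs * k.natAbs := by
      have := congrArg Int.natAbs hk
      simpa [Int.natAbs_mul] using this
    set i0 : Fin r := ⟨0, by omega⟩
    have hpd : p i0 ∣ d := by
      rw [hd_def]; exact Finset.dvd_prod_of_mem p (Finset.mem_univ i0)
    have hpk : p i0 ∣ k.natAbs := by
      have := hk' ▸ hpd
      exact ((hp i0).prime.dvd_mul.mp this).elim id id
    obtain ⟨k', hk''⟩ := hpk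
    have hdm : d = p i0 * ∏ i ∈ Finset.univ.erase i0, p i := by
      rw [hd_def]; exact (Finset.mul_prod_erase Finset.univ p (Finset.mem_univ i0)).symm
    have hdvd : p i0 ∣ ∏ i ∈ Finset.univ.erase i0, p i := by
      have h2 : p i0 * (p i0 * (k' * k')) = p i0 * ∏ i ∈ Finset.univ.erase i0, p i := by
        rw [← hdm, hk', hk'']; ring
      have h3 : p i0 * (k' * k') = ∏ i ∈ Finset.univ.erase i0, p i :=
        Nat.eq_of_mul_eq_mul_left (hp i0).pos h2
      exact ⟨k' * k', h3.symm⟩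
    obtain ⟨i, hi, hdvd'⟩ := (hp i0).prime.exists_mem_finset_dvd hdvd
    have : p i0 = p i := ((Nat.prime_dvd_prime_iff_eq (hp i0) (hp i)).mp hdvd')
    exact (Finset.ne_of_mem_erase hi) (hinj this).symm
  -- existence of a nontrivial solution to the +1 Pell equation, in ℕ
  obtain ⟨X, Y, hXY, hYne⟩ := Pell.exists_of_not_isSquare (by exact_mod_cast hdpos) hnsq
  set P : ℕ → Prop := fun n => 1 < n ∧ ∃ w, 0 < w ∧ n ^ 2 = d * w ^ 2 + 1 with hP_def
  have hP_ex : ∃ n, P n := by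
    have hw0 : 0 < Y.natAbs := by simpa [Int.natAbs_pos] using hYne
    have hn : X.natAbs ^ 2 = d * Y.natAbs ^ 2 + 1 := by
      have h2 : (X.natAbs : ℤ) ^ 2 = (d : ℤ) * (Y.natAbs : ℤ) ^ 2 + 1 := by
        rw [Int.natCast_natAbs, Int.natCast_natAbs, sq_abs, sq_abs]
        linarith [hXY]
      exact_mod_cast h2
    have h1n : 1 < X.natAbs := by
      by_contra h
      push_neg at h
      have h2 : X.natAbs ^ 2 ≤ 1 := by
        calc X.natAbs ^ 2 ≤ 1 ^ 2 := Nat.pow_le_pow_left h 2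
        _ = 1 := one_pow 2
      have h3 : 1 ≤ Y.natAbs ^ 2 := Nat.one_le_pow _ _ hw0
      have h4 : 2 * 1 ≤ d * Y.natAbs ^ 2 := Nat.mul_le_mul hd1 h3
      omega
    exact ⟨X.natAbs, h1n, Y.natAbs, hw0, hn⟩
  -- take the minimal solution
  set x : ℕ := Nat.find hP_ex with hx_def
  obtain ⟨hx1, y, hy0, hxy⟩ : P x := Nat.find_spec hP_ex
  have hmin : ∀ m, m < x → ¬ P m := fun m hm => Nat.find_min hP_ex hm
  clear_value x
  clear hx_def
  -- x is odd
  have hd4' : ((d : ℕ) : ZMod 4) = 1 := by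
    rw [← ZMod.natCast_mod, hd4]; norm_num
  have hx2 : x % 2 = 1 := by
    by_contra hodd
    obtain ⟨m, hm⟩ : 2 ∣ x := by omega
    have hc : ((x : ℕ) : ZMod 4) ^ 2 = ((d : ℕ) : ZMod 4) * ((y : ℕ) : ZMod 4) ^ 2 + 1 := by
      have := congrArg (fun n : ℕ => (n : ZMod 4)) hxy
      push_cast at this
      exact this
    rw [hm, hd4', one_mul] at hc
    push_cast at hc
    exact (by decide : ∀ a b : ZMod 4, ¬ (2 * a) ^ 2 = b ^ 2 + 1) _ _ hc
  have hy2 : y % 2 = 0 := by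
    by_contra hodd
    obtain ⟨k, hk⟩ : ∃ k, y = 2 * k + 1 := ⟨y / 2, by omega⟩
    obtain ⟨m, hm⟩ : ∃ m, x = 2 * m + 1 := ⟨x / 2, by omega⟩
    have hd2 : ((d : ℕ) : ZMod 2) = 1 := by
      rw [← ZMod.natCast_mod, show d % 2 = 1 by omega]; norm_num
    have hc : ((x : ℕ) : ZMod 2) ^ 2 = ((d : ℕ) : ZMod 2) * ((y : ℕ) : ZMod 2) ^ 2 + 1 := by
      have := congrArg (fun n : ℕ => (n : ZMod 2)) hxy
      push_cast at this
      exact this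
    rw [hm, hk, hd2, one_mul] at hc
    push_cast at hc
    exact (by decide : ∀ a b : ZMod 2, ¬ (2 * a + 1) ^ 2 = (2 * b + 1) ^ 2 + 1) _ _ hc
  -- write x = 2u+1, y = 2w
  obtain ⟨u, hu⟩ : ∃ u, x = 2 * u + 1 := ⟨x / 2, by omega⟩
  obtain ⟨w, hw⟩ : ∃ w, y = 2 * w := ⟨y / 2, by omega⟩
  have hu1 : 1 ≤ u := by omega
  have hw1 : 1 ≤ w := by omega
  have huv : u * (u + 1) = d * w ^ 2 := by
    have hZ : ((2 * u + 1 : ℕ) : ℤ) ^ 2 = (d : ℤ) * ((2 * w : ℕ) : ℤ) ^ 2 + 1 := by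
      exact_mod_cast congrArg (fun n : ℕ => (n : ℤ)) (hu ▸ hw ▸ hxy)
    have h4 : (4 : ℤ) * (u * (u + 1)) = 4 * (d * w ^ 2) := by push_cast at hZ ⊢; ring_nf; ring_nf at hZ; linarith
    have : (u : ℤ) * (u + 1) = (d : ℤ) * w ^ 2 := by linarith
    exact_mod_cast this
  set v : ℕ := u + 1 with hv_def
  clear_value v
  have hcop : Nat.Coprime u v := by simp [hv_def]
  -- split the primes according to whether they divide v
  set S : Finset (Fin r) := Finset.univ.filter (fun i => p i ∣ v) with hS_def
  set a : ℕ := ∏ i ∈ S, p i with ha_def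
  set b : ℕ := ∏ i ∈ Finset.univ.filter (fun i => ¬ p i ∣ v), p i with hb_def
  have hab : a * b = d := by
    rw [ha_def, hb_def, hS_def, hd_def]
    exact Finset.prod_filter_mul_prod_filter_not Finset.univ _ p
  have hapos : 0 < a := Finset.prod_pos fun i _ => (hp i).pos
  have hbpos : 0 < b := Finset.prod_pos fun i _ => (hp i).pos
  -- a ∣ v
  have hav : a ∣ v := by
    rw [ha_def]
    exact prod_primes_dvd_helper p hp hinj S v fun i hi => (Finset.mem_filter.mp hi).2
  have hbu : b ∣ u := by
    rw [hb_def]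
    refine prod_primes_dvd_helper p hp hinj _ u fun i hi => ?_
    have hnd : ¬ p i ∣ v := (Finset.mem_filter.mp hi).2
    have hpid : p i ∣ d := by
      rw [hd_def]; exact Finset.dvd_prod_of_mem p (Finset.mem_univ i)
    have hdvd : p i ∣ u * v := huv ▸ Dvd.dvd.mul_right hpid (w ^ 2)
    exact ((hp i).prime.dvd_mul.mp hdvd).resolve_right hnd
  obtain ⟨v', hv'⟩ := hav
  obtain ⟨u', hu'⟩ := hbu
  have hu'v' : u' * v' = w ^ 2 := by
    have h0 : (a * b) * (u' * v') = (a * b) * w ^ 2 := by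
      calc (a * b) * (u' * v') = (b * u') * (a * v') := by ring
      _ = u * v := by rw [← hu', ← hv']
      _ = d * w ^ 2 := huv
      _ = (a * b) * w ^ 2 := by rw [hab]
    exact Nat.eq_of_mul_eq_mul_left (by positivity) h0
  have hcop' : Nat.Coprime u' v' :=
    Nat.Coprime.coprime_dvd_left ⟨b, by rw [hu']; ring⟩
      (Nat.Coprime.coprime_dvd_right ⟨a, by rw [hv']; ring⟩ hcop)
  obtain ⟨t, ht⟩ : ∃ t, u' = t ^ 2 :=
    exists_eq_pow_of_mul_eq_pow (Nat.isUnit_iff.mpr hcop') hu'v'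
  obtain ⟨s, hs⟩ : ∃ s, v' = s ^ 2 :=
    exists_eq_pow_of_mul_eq_pow (Nat.isUnit_iff.mpr
      (Nat.Coprime.symm hcop')) (by rw [mul_comm]; exact hu'v')
  have hveq : v = a * s ^ 2 := by rw [hv', hs]
  have hueq : u = b * t ^ 2 := by rw [hu', ht]
  have hkey : a * s ^ 2 = b * t ^ 2 + 1 := by
    rw [← hveq, ← hueq]; exact hv_def
  -- case analysis on S
  by_cases hSuniv : S = Finset.univ
  · -- a = d : we get a solution to the negative Pell equation
    have had : a = d := by rw [ha_def, hSuniv, hd_def]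
    have hb1 : b = 1 := by
      have h := hab
      rw [had] at h
      exact Nat.eq_of_mul_eq_mul_left hdpos (by rw [mul_one]; exact h)
    refine ⟨(t : ℤ), (s : ℤ), ?_⟩
    have h6 := hkey
    rw [had, hb1, one_mul] at h6
    have hZ : (d : ℤ) * (s : ℤ) ^ 2 = (t : ℤ) ^ 2 + 1 := by exact_mod_cast h6
    linarith
  by_cases hSempty : S = ∅
  · -- a = 1 : contradiction with minimality
    exfalso
    have ha1 : a = 1 := by rw [ha_def, hSempty]; simp
    have hbd : b = d := by rw [← hab, ha1, one_mul]
    rw [ha1, one_mul] at hkey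
    rw [hbd] at hkey
    -- s^2 = d t^2 + 1, with s < x
    have ht0 : 0 < t := by
      rcases Nat.eq_zero_or_pos t with h0 | h0
      · exfalso
        rw [h0] at hkey
        have hs1' : s ^ 2 = 1 := by simpa using hkey
        have hveq' : v = s ^ 2 := by rw [hveq, ha1, one_mul]
        omega
      · exact h0
    have hs1 : 1 < s := by
      have h3 : 1 ≤ t ^ 2 := Nat.one_le_pow _ _ ht0
      have h4 : 2 * 1 ≤ d * t ^ 2 := Nat.mul_le_mul hd1 h3
      by_contra h
      push_neg at h
      have h5 : s ^ 2 ≤ 1 ^ 2 := Nat.pow_le_pow_left h 2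
      omega
    have hsx : s < x := by
      have hsv : s ^ 2 = v := by rw [hveq, ha1, one_mul]
      have hss : s ^ 1 < s ^ 2 := Nat.pow_lt_pow_right hs1 (by norm_num)
      rw [pow_one, hsv] at hss
      omega
    exact hmin s hsx ⟨hs1, t, ht0, hkey⟩
  · -- middle case: contradiction via Legendre symbols
    exfalso
    obtain ⟨j', hj'⟩ := Finset.nonempty_iff_ne_empty.mpr hSempty
    obtain ⟨j, hj⟩ : ∃ j, j ∉ S := by
      by_contra h
      push_neg at h
      exact hSuniv (Finset.eq_univ_iff_forall.mpr h)
    -- |S| is even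
    have hevenS : Even S.card := by
      haveI : Fact (p j).Prime := ⟨hp j⟩
      have hqb : p j ∣ b := by
        rw [hb_def]
        refine Finset.dvd_prod_of_mem p ?_
        simp only [Finset.mem_filter, Finset.mem_univ, true_and]
        intro hdvd
        exact hj (by rw [hS_def]; simp [hdvd])
      have hb0 : ((b : ℕ) : ZMod (p j)) = 0 :=
        (ZMod.natCast_eq_zero_iff _ _).mpr hqb
      have hc : ((a : ℕ) : ZMod (p j)) * ((s : ℕ) : ZMod (p j)) ^ 2 = 1 := by
        have := congrArg (fun n : ℕ => (n : ZMod (p j))) hkey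
        push_cast at this
        rw [hb0] at this
        simpa using this
      have hs0 : ((s : ℕ) : ZMod (p j)) ≠ 0 := by
        intro h0
        rw [h0] at hc
        simp at hc
      have ha0 : ((a : ℕ) : ZMod (p j)) ≠ 0 := by
        intro h0
        rw [h0] at hc
        simp at hc
      have hsq : IsSquare ((a : ℕ) : ZMod (p j)) := by
        refine ⟨(((s : ℕ) : ZMod (p j)))⁻¹, ?_⟩
        field_simp
        linear_combination hc
      have hleg1 : legendreSym (p j) ((a : ℕ) : ℤ) = 1 :=
        (legendreSym.eq_one_iff' (p j) ha0).mpr hsq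
      have hprod : legendreSym (p j) ((a : ℕ) : ℤ) = (-1 : ℤ) ^ S.card := by
        rw [ha_def, legendre_prod_helper]
        rw [Finset.prod_congr rfl (fun i hi => hleg i j (by rintro rfl; exact hj hi))]
        rw [Finset.prod_const]
      rw [hleg1] at hprod
      exact (neg_one_pow_eq_one_iff_even (by norm_num : (-1 : ℤ) ≠ 1)).mp hprod.symm
    -- |Sᶜ| is even
    have hevenSc : Even (Finset.univ.filter (fun i => ¬ p i ∣ v)).card := by
      haveI : Fact (p j').Prime := ⟨hp j'⟩
      have hqa : p j' ∣ a := by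
        rw [ha_def]
        exact Finset.dvd_prod_of_mem p hj'
      have ha0' : ((a : ℕ) : ZMod (p j')) = 0 :=
        (ZMod.natCast_eq_zero_iff _ _).mpr hqa
      have hc : ((b : ℕ) : ZMod (p j')) * ((t : ℕ) : ZMod (p j')) ^ 2 = -1 := by
        have := congrArg (fun n : ℕ => (n : ZMod (p j'))) hkey
        push_cast at this
        rw [ha0'] at this
        simp at this
        linear_combination -this
      have ht0 : ((t : ℕ) : ZMod (p j')) ≠ 0 := by
        intro h0
        rw [h0] at hc
        simp at hc
      have hb0' : ((b : ℕ) : ZMod (p j')) ≠ 0 := by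
        intro h0
        rw [h0] at hc
        simp at hc
      have hsqneg : IsSquare (-1 : ZMod (p j')) :=
        ZMod.exists_sq_eq_neg_one_iff.mpr (by rw [h1 j']; omega)
      have hbsq : IsSquare ((b : ℕ) : ZMod (p j')) := by
        have hbeq : ((b : ℕ) : ZMod (p j')) = (-1) * ((((t : ℕ) : ZMod (p j')))⁻¹) ^ 2 := by
          field_simp
          linear_combination hc
        rw [hbeq]
        exact hsqneg.mul ⟨_, (sq _)⟩
      have hleg1 : legendreSym (p j') ((b : ℕ) : ℤ) = 1 :=
        (legendreSym.eq_one_iff' (p j') hb0').mpr hbsq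
      have hprod : legendreSym (p j') ((b : ℕ) : ℤ) =
          (-1 : ℤ) ^ (Finset.univ.filter (fun i => ¬ p i ∣ v)).card := by
        rw [hb_def, legendre_prod_helper]
        rw [Finset.prod_congr rfl (fun i hi => hleg i j' ?_)]
        · rw [Finset.prod_const]
        · rintro rfl
          exact (Finset.mem_filter.mp hi).2 (Finset.mem_filter.mp hj').2
      rw [hleg1] at hprod
      exact (neg_one_pow_eq_one_iff_even (by norm_num : (-1 : ℤ) ≠ 1)).mp hprod.symm
    -- contradiction with r = 2 or r odd
    have hcards : S.card + (Finset.univ.filter (fun i => ¬ p i ∣ v)).card = r := by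
      rw [hS_def]
      rw [Finset.card_filter_add_card_filter_not]
      simp
    have hS1 : 1 ≤ S.card := Finset.card_pos.mpr ⟨j', hj'⟩
    have hS2 : 1 ≤ (Finset.univ.filter (fun i => ¬ p i ∣ v)).card := by
      refine Finset.card_pos.mpr ⟨j, ?_⟩
      simp only [Finset.mem_filter, Finset.mem_univ, true_and]
      intro hdvd
      exact hj (by rw [hS_def]; simp [hdvd])
    obtain ⟨m1, hm1⟩ := hevenS
    obtain ⟨m2, hm2⟩ := hevenSc
    rcases hr' with h2 | ⟨k, hk⟩ <;> omega
end

section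
/- Let p be an odd prime, let d be an integer not divisible by p, and let n be a nonzero integer. Then there exist x, y in the ring ℤ_p of p-adic integers with x^2 + d·y^2 = n if and only if the p-adic valuation v_p(n) is even or the Legendre symbol (-d/p) equals 1. -/
/-!
Write `n = p ^ v * u` with `u` a unit. Modulo `p` the form `a² + d b²` takes every value (a
counting argument), and Hensel's lemma lifts a solution in which `a` or `b` is a unit, so every
unit, and hence every `n` with `v` even, is represented. If `-d` is a square mod `p`, it is a square
`a²` in `ℤ_[p]`, and `x² + d y² = (x - a y)(x + a y)` represents everything. Conversely, if `-d` is
not a square mod `p`, the form is anisotropic mod `p`: `x² + d y²` is a unit as soon as `x` or `y`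
is, and otherwise `p` divides both, so the valuation of `x² + d y²` is always even.
-/

open Polynomial

theorem sq_add_mul_sq_eq_zero_iff {K : Type*} [Field K] {d : K} (hd : ¬IsSquare (-d)) {a b : K} :
    a ^ 2 + d * b ^ 2 = 0 ↔ a = 0 ∧ b = 0 := by
  refine ⟨fun h => ?_, by rintro ⟨rfl, rfl⟩; ring⟩
  by_cases hb : b = 0
  · subst hb
    exact ⟨by simpa using h, rfl⟩
  · exact (hd ⟨a / b, by field_simp; linear_combination -h⟩).elim

theorem exists_sq_add_mul_sq_eq_of_sq_eq_neg {R : Type*} [CommRing R] (h2 : IsUnit (2 : R))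
    {a d : R} (ha : IsUnit a) (had : a ^ 2 = -d) (n : R) : ∃ x y, x ^ 2 + d * y ^ 2 = n := by
  obtain ⟨i, hi⟩ := h2.exists_right_inv
  obtain ⟨j, hj⟩ := ha.exists_right_inv
  -- `x ∓ a y = (n + 1)/2 ∓ (n - 1)/2` has product `n`
  refine ⟨(n + 1) * i, (n - 1) * i * j, ?_⟩
  linear_combination ((n - 1) * i * j) ^ 2 * had - ((n - 1) * i) ^ 2 * (a * j + 1) * hj
    + n * (2 * i + 1) * hi

namespace PadicInt

variable {p : ℕ} [Fact p.Prime]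

theorem isUnit_iff_toZMod_ne_zero {z : ℤ_[p]} : IsUnit z ↔ toZMod z ≠ 0 := by
  rw [ne_eq, ← RingHom.mem_ker, ker_toZMod, IsLocalRing.mem_maximalIdeal, mem_nonunits_iff,
    not_not]

theorem toZMod_eq_zero_iff_dvd {z : ℤ_[p]} : toZMod z = 0 ↔ (p : ℤ_[p]) ∣ z := by
  rw [← RingHom.mem_ker, ker_toZMod, maximalIdeal_eq_span_p, Ideal.mem_span_singleton]

theorem isUnit_intCast_iff {d : ℤ} : IsUnit (d : ℤ_[p]) ↔ ¬(p : ℤ) ∣ d := by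
  rw [isUnit_iff_toZMod_ne_zero, map_intCast, ne_eq, ZMod.intCast_zmod_eq_zero_iff_dvd]

theorem isUnit_two (hp : p ≠ 2) : IsUnit (2 : ℤ_[p]) := by
  rw [isUnit_iff_toZMod_ne_zero, map_ofNat]
  exact Ring.two_ne_zero (by rwa [ZMod.ringChar_zmod_n])

theorem valuation_eq_zero_of_isUnit {z : ℤ_[p]} (hz : IsUnit z) : z.valuation = 0 := by
  obtain ⟨u, rfl⟩ := hz
  have := valuation_mul u.isUnit.ne_zero u⁻¹.isUnit.ne_zero
  rw [Units.mul_inv, valuation_one] at this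
  omega

theorem valuation_intCast (n : ℤ) : (n : ℤ_[p]).valuation = padicValInt p n := by
  have h := valuation_coe (n : ℤ_[p])
  rw [coe_intCast, Padic.valuation_intCast] at h
  exact_mod_cast h.symm

theorem exists_mul_sq_eq_of_toZMod_eq (hp : p ≠ 2) {c a u : ℤ_[p]} (hc : IsUnit c)
    (ha : IsUnit a) (h : toZMod (c * a ^ 2) = toZMod u) : ∃ z, c * z ^ 2 = u := by
  set F : ℤ_[p][X] := C c * X ^ 2 - C u
  have hFa : F.aeval a = c * a ^ 2 - u := by simp [F]
  have hF'a : F.derivative.aeval a = c * (2 * a) := by simp [F, one_add_one_eq_two]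
  have hF : ‖F.aeval a‖ < ‖F.derivative.aeval a‖ ^ 2 := by
    rw [hF'a, isUnit_iff.1 (hc.mul ((isUnit_two hp).mul ha)), one_pow, ← not_isUnit_iff,
      isUnit_iff_toZMod_ne_zero, not_not, hFa, map_sub, h, sub_self]
  obtain ⟨z, hz, -⟩ := hensels_lemma hF
  refine ⟨z, ?_⟩
  simpa [F, sub_eq_zero] using hz

theorem exists_sq_add_mul_sq_eq_of_isUnit (hp : p ≠ 2) {d u : ℤ_[p]} (hd : IsUnit d)
    (hu : IsUnit u) : ∃ x y, x ^ 2 + d * y ^ 2 = u := by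
  have hd₀ := isUnit_iff_toZMod_ne_zero.1 hd
  have hu₀ := isUnit_iff_toZMod_ne_zero.1 hu
  have hcard : Fintype.card (ZMod p) % 2 = 1 := by
    rw [ZMod.card]
    exact Nat.odd_iff.1 ((Fact.out : p.Prime).odd_of_ne_two hp)
  obtain ⟨a, b, hab⟩ := FiniteField.exists_root_sum_quadratic
    (degree_X_pow_sub_C two_pos (toZMod u)) (degree_C_mul_X_pow 2 hd₀) hcard
  obtain ⟨x₀, rfl⟩ := ZMod.ringHom_surjective toZMod a
  obtain ⟨y₀, rfl⟩ := ZMod.ringHom_surjective toZMod b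
  simp only [eval_sub, eval_pow, eval_X, eval_C, eval_mul] at hab
  by_cases hx₀ : IsUnit x₀
  · obtain ⟨x, hx⟩ := exists_mul_sq_eq_of_toZMod_eq hp isUnit_one hx₀ (u := u - d * y₀ ^ 2) (by
      simp only [map_mul, map_pow, map_sub, map_one]
      linear_combination hab)
    exact ⟨x, y₀, by linear_combination hx⟩
  · rw [isUnit_iff_toZMod_ne_zero, not_not] at hx₀
    have hy₀ : IsUnit y₀ := by
      refine isUnit_iff_toZMod_ne_zero.2 fun hy₀ => hu₀ ?_
      rw [hx₀, hy₀] at hab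
      linear_combination -hab
    obtain ⟨y, hy⟩ := exists_mul_sq_eq_of_toZMod_eq hp hd hy₀ (u := u) (by
      rw [hx₀] at hab
      simp only [map_mul, map_pow]
      linear_combination hab)
    exact ⟨0, y, by linear_combination hy⟩

theorem exists_sq_add_mul_sq_eq_of_even_valuation (hp : p ≠ 2) {d : ℤ_[p]} (hd : IsUnit d)
    {n : ℤ_[p]} (hn : Even n.valuation) : ∃ x y, x ^ 2 + d * y ^ 2 = n := by
  rcases eq_or_ne n 0 with rfl | hn₀
  · exact ⟨0, 0, by ring⟩
  obtain ⟨k, hk⟩ := hn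
  obtain ⟨x, y, hxy⟩ := exists_sq_add_mul_sq_eq_of_isUnit hp hd (unitCoeff hn₀).isUnit
  refine ⟨p ^ k * x, p ^ k * y, ?_⟩
  rw [unitCoeff_spec hn₀, hk, ← hxy]
  ring

theorem exists_sq_add_mul_sq_eq_of_isSquare (hp : p ≠ 2) {d : ℤ_[p]} (hd : IsUnit d)
    (h : IsSquare (-toZMod d)) (n : ℤ_[p]) : ∃ x y, x ^ 2 + d * y ^ 2 = n := by
  obtain ⟨r, hr⟩ := h
  obtain ⟨a, rfl⟩ := ZMod.ringHom_surjective toZMod r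
  have ha : IsUnit a := by
    refine isUnit_iff_toZMod_ne_zero.2 fun ha => isUnit_iff_toZMod_ne_zero.1 hd ?_
    rw [ha, mul_zero, neg_eq_zero] at hr
    exact hr
  obtain ⟨s, hs⟩ := exists_mul_sq_eq_of_toZMod_eq hp isUnit_one ha (u := -d) (by
    rw [map_neg, hr, one_mul, map_pow, sq])
  rw [one_mul] at hs
  exact exists_sq_add_mul_sq_eq_of_sq_eq_neg (isUnit_two hp)
    ((isUnit_pow_iff two_ne_zero).1 (hs ▸ hd.neg)) hs n

theorem isUnit_sq_add_mul_sq {d x y : ℤ_[p]} (hd : ¬IsSquare (-toZMod d))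
    (hxy : IsUnit x ∨ IsUnit y) : IsUnit (x ^ 2 + d * y ^ 2) := by
  simp only [isUnit_iff_toZMod_ne_zero, map_add, map_mul, map_pow] at hxy ⊢
  rw [ne_eq, sq_add_mul_sq_eq_zero_iff hd]
  tauto

theorem even_valuation_sq_add_mul_sq {d : ℤ_[p]} (hd : ¬IsSquare (-toZMod d)) (x y : ℤ_[p]) :
    Even (x ^ 2 + d * y ^ 2).valuation := by
  induction hm : (x ^ 2 + d * y ^ 2).valuation using Nat.strong_induction_on generalizing x y
    with | _ m ih =>
  by_cases hxy : IsUnit x ∨ IsUnit y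
  · rw [← hm, valuation_eq_zero_of_isUnit (isUnit_sq_add_mul_sq hd hxy)]
    exact Even.zero
  rcases eq_or_ne (x ^ 2 + d * y ^ 2) 0 with h₀ | h₀
  · rw [← hm, h₀, valuation_zero]
    exact Even.zero
  simp only [not_or, isUnit_iff_toZMod_ne_zero, not_not, toZMod_eq_zero_iff_dvd] at hxy
  obtain ⟨⟨x', rfl⟩, ⟨y', rfl⟩⟩ := hxy
  have hp2 : (↑p * x') ^ 2 + d * (↑p * y') ^ 2 = p ^ 2 * (x' ^ 2 + d * y' ^ 2) := by ring
  have h₀' : x' ^ 2 + d * y' ^ 2 ≠ 0 := fun h => h₀ (by rw [hp2, h, mul_zero])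
  rw [hp2, valuation_p_pow_mul _ _ h₀'] at hm
  rw [← hm, add_comm]
  exact (ih _ (by omega) x' y' rfl).add even_two

end PadicInt

theorem padic_solvable_iff_general (p : ℕ) [Fact p.Prime] (hodd : p ≠ 2)
    (d : ℤ) (hd : ¬ (p : ℤ) ∣ d) (n : ℤ) :
    (∃ x y : ℤ_[p], x ^ 2 + (d : ℤ_[p]) * y ^ 2 = (n : ℤ_[p])) ↔
      Even (padicValInt p n) ∨ legendreSym p (-d) = 1 := by
  have hd' : IsUnit (d : ℤ_[p]) := PadicInt.isUnit_intCast_iff.2 hd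
  have hleg : legendreSym p (-d) = 1 ↔ IsSquare (-PadicInt.toZMod (d : ℤ_[p])) := by
    rw [legendreSym.eq_one_iff, map_intCast, Int.cast_neg]
    rwa [Int.cast_neg, neg_ne_zero, ne_eq, ZMod.intCast_zmod_eq_zero_iff_dvd]
  rw [hleg, ← PadicInt.valuation_intCast]
  constructor
  · rintro ⟨x, y, h⟩
    by_contra! ⟨hn, hsq⟩
    exact hn (h ▸ PadicInt.even_valuation_sq_add_mul_sq hsq x y)
  · rintro (hn | hsq)
    · exact PadicInt.exists_sq_add_mul_sq_eq_of_even_valuation hodd hd' hn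
    · exact PadicInt.exists_sq_add_mul_sq_eq_of_isSquare hodd hd' hsq _

/-- Let `p` be an odd prime, `d` an integer not divisible by `p`, and `n` a
nonzero integer. Then `x² + d·y² = n` has a solution in the `p`-adic integers
iff `v_p(n)` is even or the Legendre symbol `(-d/p)` equals `1`. -/
theorem padic_solvable_iff (p : ℕ) [Fact p.Prime] (hodd : p ≠ 2)
    (d : ℤ) (hd : ¬ (p : ℤ) ∣ d) (n : ℤ) (hn : n ≠ 0) :
    (∃ x y : ℤ_[p], x ^ 2 + (d : ℤ_[p]) * y ^ 2 = (n : ℤ_[p])) ↔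
      Even (padicValInt p n) ∨ legendreSym p (-d) = 1 :=
  padic_solvable_iff_general p hodd d hd n
end
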